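/- Let k ≥ 1 be an integer, a, b ∈ E, and ν ∈ F, and define b₁ ∈ M₂(F) and b₂ ∈ E as follows: b₁ = −(p^{−k+2}/2)·ν·[[−p^{−k−1}(āb + ab̄), 2p^{−k−1}a·ā],[−2p^{−k−1}b·b̄, p^{−k−1}(ab̄ + āb)]] and b₂ = −(p^{−2k+1}/2)·(ab̄ − āb)·ν. Then the characteristic polynomial of b₁ (over F) equals the characteristic polynomial of the matrix x_{b₂,0} = [[b₂, 0],[0, b̄₂]] ∈ M₂(E) realizing b₂ as an element of the quaternion division algebra D; both equal X² + N_{E/F}(b₂), since tr(b₁) = 0 = b₂ + b̄₂ and det(b₁) = b₂·b̄₂. Hence b₁ and b₂ lie in corresponding conjugacy classes of GL₂(F) and D^× (whenever they are invertible). -/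

import Mathlib

noncomputable section
open Matrix

/-- The image of `p` in `E`. -/
def pE (p : ℕ) [Fact p.Prime] (E : Type) [Field E] [Algebra ℚ_[p] E] : E :=
  algebraMap ℚ_[p] E (p : ℚ_[p])

/-- The ring of integers `O_E = ℤ_p + ℤ_p·α` of the unramified quadratic extension
`E = F(α)`, as a set. -/
def OE (p : ℕ) [Fact p.Prime] (E : Type) [Field E] [Algebra ℚ_[p] E] (α : E) : Set E :=
  {x | ∃ a b : ℤ_[p],
    x = algebraMap ℚ_[p] E (a : ℚ_[p]) + algebraMap ℚ_[p] E (b : ℚ_[p]) * α}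

/-- The element `x_{a,b} = !![a, b; p·conj b, conj a]` of the quaternion division algebra
`D ⊆ M₂(E)`. -/
def qmat (p : ℕ) [Fact p.Prime] (E : Type) [Field E] [Algebra ℚ_[p] E]
    (conj : E → E) (a b : E) : Matrix (Fin 2) (Fin 2) E :=
  !![a, b; pE p E * conj b, conj a]

/-- The uniformizer `δ = x_{0,1}` of `D`, with `δ² = p`. -/
def deltaM (p : ℕ) [Fact p.Prime] (E : Type) [Field E] [Algebra ℚ_[p] E] :
    Matrix (Fin 2) (Fin 2) E :=
  !![0, 1; pE p E, 0]

/-- The maximal order `O_D = {x_{a,b} : a, b ∈ O_E}` of `D`, as a set. -/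
def ODset (p : ℕ) [Fact p.Prime] (E : Type) [Field E] [Algebra ℚ_[p] E]
    (α : E) (conj : E → E) : Set (Matrix (Fin 2) (Fin 2) E) :=
  {m | ∃ a b : E, a ∈ OE p E α ∧ b ∈ OE p E α ∧ m = qmat p E conj a b}

/-- The norm-one group `D¹ = {x ∈ D : det x = 1}`, as a set. -/
def D1set (p : ℕ) [Fact p.Prime] (E : Type) [Field E] [Algebra ℚ_[p] E]
    (conj : E → E) : Set (Matrix (Fin 2) (Fin 2) E) :=
  {m | (∃ a b : E, m = qmat p E conj a b) ∧ m.det = 1}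

/-- `vDge p E α conj r m` says `v_D(m) ≥ r`, i.e. `m ∈ δ^r·O_D = P_D^r`. -/
def vDge (p : ℕ) [Fact p.Prime] (E : Type) [Field E] [Algebra ℚ_[p] E]
    (α : E) (conj : E → E) (r : ℕ) (m : Matrix (Fin 2) (Fin 2) E) : Prop :=
  ∃ yy ∈ ODset p E α conj, m = deltaM p E ^ r * yy

/-- `x ∈ P_E = p·O_E`. -/
def inPE (p : ℕ) [Fact p.Prime] (E : Type) [Field E] [Algebra ℚ_[p] E]
    (α : E) (x : E) : Prop :=
  ∃ c ∈ OE p E α, x = pE p E * c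

/-- The pure tensor `v ⊗ w ∈ 𝒲 = V ⊗_E W` in coordinates: `(v ⊗ w) i j = v i · conj (w j)`
(the `E`-structure on `W`-coordinates is twisted by conjugation, so that the symplectic
form below is well defined on `𝒲`).  Here `w = (c, d)` stands for `c + d·δ ∈ W = D`. -/
def tens (E : Type) [Field E] (conj : E → E) (v w : Fin 2 → E) :
    Matrix (Fin 2) (Fin 2) E :=
  Matrix.of fun i j => v i * conj (w j)

/-- The symplectic form `⟨⟨x, y⟩⟩ = Tr_{E/F}(⟨v,v'⟩·conj(⟨w,w'⟩'))` of `𝒲`, written in the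
coordinates above, with values `t + conj t` landing in (the image of) `F`. -/
def sympE (p : ℕ) [Fact p.Prime] (E : Type) [Field E] [Algebra ℚ_[p] E]
    (conj : E → E) (x y : Matrix (Fin 2) (Fin 2) E) : E :=
  (x 0 0 * conj (y 1 0) - pE p E * (x 0 1 * conj (y 1 1))
      - x 1 0 * conj (y 0 0) + pE p E * (x 1 1 * conj (y 0 1)))
    + conj (x 0 0 * conj (y 1 0) - pE p E * (x 0 1 * conj (y 1 1))
      - x 1 0 * conj (y 0 0) + pE p E * (x 1 1 * conj (y 0 1)))

/-- The lattice `A = Γ ⊗ Γ'`: the `O_E`-span (= additive span) of the pure tensors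
`v ⊗ w` with `v ∈ Γ = O_E²` and `w ∈ Γ' = O_E + O_E·δ`. -/
def Alat (p : ℕ) [Fact p.Prime] (E : Type) [Field E] [Algebra ℚ_[p] E]
    (α : E) (conj : E → E) : AddSubgroup (Matrix (Fin 2) (Fin 2) E) :=
  AddSubgroup.closure
    {m | ∃ v w : Fin 2 → E, (∀ i, v i ∈ OE p E α) ∧ (∀ j, w j ∈ OE p E α) ∧
      m = tens E conj v w}

/-- `x` lies in (the image in `E` of) `ℤ_p`. -/
def integralF (p : ℕ) [Fact p.Prime] (E : Type) [Field E] [Algebra ℚ_[p] E]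
    (x : E) : Prop :=
  ∃ s : ℤ_[p], x = algebraMap ℚ_[p] E ((s : ℚ_[p]))

/-- The dual lattice `L* = {z ∈ 𝒲 : ⟨⟨z, l⟩⟩ ∈ ℤ_p for all l ∈ L}`. -/
def dualLat (p : ℕ) [Fact p.Prime] (E : Type) [Field E] [Algebra ℚ_[p] E]
    (α : E) (conj : E → E) (L : Set (Matrix (Fin 2) (Fin 2) E)) :
    Set (Matrix (Fin 2) (Fin 2) E) :=
  {zz | ∀ l ∈ L, integralF p E (sympE p E conj zz l)}

/-- The entrywise embedding `M₂(ℤ_p) → M₂(E)`. -/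
def toE (p : ℕ) [Fact p.Prime] (E : Type) [Field E] [Algebra ℚ_[p] E]
    (m : Matrix (Fin 2) (Fin 2) ℤ_[p]) : Matrix (Fin 2) (Fin 2) E :=
  m.map fun t => algebraMap ℚ_[p] E (t : ℚ_[p])

/-- The Cayley transform `c(m) = (1 - m)(1 + m)⁻¹`. -/
def cay {E : Type} [Field E] (m : Matrix (Fin 2) (Fin 2) E) : Matrix (Fin 2) (Fin 2) E :=
  (1 - m) * (1 + m)⁻¹

/-- The skew-Hermitian form `⟨x, y⟩ = x₁·conj y₂ - x₂·conj y₁` on `V = E²`. -/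
def sesqV (E : Type) [Field E] (conj : E → E) (x y : Fin 2 → E) : E :=
  x 0 * conj (y 1) - x 1 * conj (y 0)

/-- `Tr_{E/F}(x) = x + conj x`, as an element of `E`. -/
def trEl (E : Type) [Field E] (conj : E → E) (x : E) : E := x + conj x

/-! Both `b₁` and `x_{b₂,0}` are traceless `2 × 2` matrices, so their characteristic
polynomials are `X² + det`. Up to a scalar of `F`, `b₁` has determinant
`4 N(a) N(b) - (āb + ab̄)² = -(ab̄ - āb)²`, while `b₂` is an `F`-multiple of the trace-zero
element `ab̄ - āb`, whose norm is `-(ab̄ - āb)²`; the powers of `p` agree. -/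

theorem Matrix.charpoly_fin_two_of_trace_eq_zero {R : Type*} [CommRing R] [Nontrivial R]
    {M : Matrix (Fin 2) (Fin 2) R} (h : M.trace = 0) :
    M.charpoly = Polynomial.X ^ 2 + Polynomial.C M.det := by
  rw [M.charpoly_fin_two, h, map_zero, zero_mul, sub_zero]

theorem AlgHom.involutive_of_apply_eq_neg {F A : Type*} [CommRing F] [Ring A] [Algebra F A]
    (σ : A →ₐ[F] A) {α : A}
    (hspan : ∀ x : A, ∃ a b : F, x = algebraMap F A a + algebraMap F A b * α)
    (hσ : σ α = -α) : Function.Involutive σ := by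
  intro x
  obtain ⟨a, b, rfl⟩ := hspan x
  simp [hσ]

section Theta

variable {p : ℕ} [Fact p.Prime] {E : Type} [Field E] [Algebra ℚ_[p] E]

theorem pE_ne_zero : pE p E ≠ 0 :=
  (map_ne_zero _).2 (Nat.cast_ne_zero.2 (Fact.out : p.Prime).ne_zero)

theorem trace_qmat (conj : E → E) (c d : E) : (qmat p E conj c d).trace = c + conj c := by
  simp [qmat, Matrix.trace_fin_two]

theorem det_qmat (conj : E → E) (c d : E) :
    (qmat p E conj c d).det = c * conj c - d * (pE p E * conj d) := by
  simp [qmat, Matrix.det_fin_two]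

variable (p E) in
def thetaB₁ (conj : E →ₐ[ℚ_[p]] E) (k : ℕ) (a b : E) (ν : ℚ_[p]) :
    Matrix (Fin 2) (Fin 2) E :=
  (-(pE p E ^ 2 * ((pE p E)⁻¹) ^ k * (2 : E)⁻¹ * algebraMap ℚ_[p] E ν)) •
      !![-(((pE p E)⁻¹) ^ (k + 1)) * (conj a * b + a * conj b),
           2 * ((pE p E)⁻¹) ^ (k + 1) * (a * conj a);
         -(2 * ((pE p E)⁻¹) ^ (k + 1) * (b * conj b)),
           ((pE p E)⁻¹) ^ (k + 1) * (a * conj b + conj a * b)]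

variable (p E) in
def thetaB₂ (conj : E →ₐ[ℚ_[p]] E) (k : ℕ) (a b : E) (ν : ℚ_[p]) : E :=
  -(pE p E * ((pE p E)⁻¹) ^ (2 * k) * (2 : E)⁻¹)
      * (a * conj b - conj a * b) * algebraMap ℚ_[p] E ν

variable (conj : E →ₐ[ℚ_[p]] E) (k : ℕ) (a b : E) (ν : ℚ_[p])

theorem trace_thetaB₁ : (thetaB₁ p E conj k a b ν).trace = 0 := by
  simp only [thetaB₁, Matrix.trace_smul, Matrix.trace_fin_two_of]
  ring

theorem conj_thetaB₂ (hconj : Function.Involutive conj) :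
    conj (thetaB₂ p E conj k a b ν) = -thetaB₂ p E conj k a b ν := by
  simp only [thetaB₂, pE, map_mul, map_neg, map_sub, map_inv₀, map_pow, map_ofNat,
    AlgHom.commutes, hconj a, hconj b]
  ring

theorem det_thetaB₁ (hconj : Function.Involutive conj) :
    (thetaB₁ p E conj k a b ν).det =
      thetaB₂ p E conj k a b ν * conj (thetaB₂ p E conj k a b ν) := by
  rw [conj_thetaB₂ conj k a b ν hconj, thetaB₁, Matrix.det_smul, Matrix.det_fin_two_of,
    Fintype.card_fin, thetaB₂]
  have hp_cancel : pE p E ^ 2 * (pE p E)⁻¹ ^ 2 = 1 := by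
    rw [← mul_pow, mul_inv_cancel₀ pE_ne_zero, one_pow]
  linear_combination -(pE p E ^ 2 * (pE p E)⁻¹ ^ (4 * k) * (2 : E)⁻¹ ^ 2
    * algebraMap ℚ_[p] E ν ^ 2 * (a * conj b - conj a * b) ^ 2) * hp_cancel

end Theta

theorem stmt19_general (p : ℕ) [Fact p.Prime]
    (E : Type) [Field E] [Algebra ℚ_[p] E] (α : E)
    (hspan : ∀ x : E, ∃ a b : ℚ_[p], x = algebraMap ℚ_[p] E a + algebraMap ℚ_[p] E b * α)
    (conj : E →ₐ[ℚ_[p]] E) (hconj : conj α = -α)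
    (k : ℕ) (a b : E) (ν : ℚ_[p])
    (b₁ : Matrix (Fin 2) (Fin 2) E)
    (hb₁ : b₁ = (-(pE p E ^ 2 * ((pE p E)⁻¹) ^ k * (2 : E)⁻¹ * algebraMap ℚ_[p] E ν)) •
      !![-(((pE p E)⁻¹) ^ (k + 1)) * (conj a * b + a * conj b),
           2 * ((pE p E)⁻¹) ^ (k + 1) * (a * conj a);
         -(2 * ((pE p E)⁻¹) ^ (k + 1) * (b * conj b)),
           ((pE p E)⁻¹) ^ (k + 1) * (a * conj b + conj a * b)])
    (b₂ : E)
    (hb₂ : b₂ = -(pE p E * ((pE p E)⁻¹) ^ (2 * k) * (2 : E)⁻¹)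
      * (a * conj b - conj a * b) * algebraMap ℚ_[p] E ν) :
    Matrix.charpoly b₁ = Matrix.charpoly (qmat p E conj b₂ 0) ∧
    Matrix.charpoly b₁ = Polynomial.X ^ 2 + Polynomial.C (b₂ * conj b₂) ∧
    Matrix.trace b₁ = 0 ∧
    b₂ + conj b₂ = 0 ∧
    b₁.det = b₂ * conj b₂ := by
  have hinv := conj.involutive_of_apply_eq_neg hspan hconj
  change b₁ = thetaB₁ p E conj k a b ν at hb₁
  change b₂ = thetaB₂ p E conj k a b ν at hb₂
  subst hb₁ hb₂
  have htr := trace_thetaB₁ conj k a b ν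
  have hsum : thetaB₂ p E conj k a b ν + conj (thetaB₂ p E conj k a b ν) = 0 := by
    rw [conj_thetaB₂ conj k a b ν hinv, add_neg_cancel]
  have hdet := det_thetaB₁ conj k a b ν hinv
  have hchar := Matrix.charpoly_fin_two_of_trace_eq_zero htr
  refine ⟨?_, hchar.trans (by rw [hdet]), htr, hsum, hdet⟩
  rw [hchar, Matrix.charpoly_fin_two_of_trace_eq_zero ((trace_qmat _ _ _).trans hsum), hdet,
    det_qmat, zero_mul, sub_zero]

/-- for `k ≥ 1`, `a, b ∈ E`, `ν ∈ F`, with `b₁` and `b₂` as in the theta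
correspondence (see STATEMENT 18), the characteristic polynomial of `b₁` over `F` equals
the (reduced) characteristic polynomial of `x_{b₂,0} ∈ D`; both equal `X² + N_{E/F}(b₂)`,
since `tr b₁ = 0 = b₂ + b̄₂` and `det b₁ = b₂·b̄₂`.  Hence `b₁` and `b₂` lie in
corresponding conjugacy classes of `GL₂(F)` and `Dˣ`. -/
theorem stmt19 (p : ℕ) [Fact p.Prime] (hp : p ≠ 2)
    (z : ℤ_[p]ˣ) (hz : ¬ ∃ w : ℤ_[p], w * w = (z : ℤ_[p]))
    (E : Type) [Field E] [Algebra ℚ_[p] E] (α : E)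
    (hα : α * α = algebraMap ℚ_[p] E ((z : ℤ_[p]) : ℚ_[p]))
    (hα0 : α ∉ Set.range (algebraMap ℚ_[p] E))
    (hspan : ∀ x : E, ∃ a b : ℚ_[p], x = algebraMap ℚ_[p] E a + algebraMap ℚ_[p] E b * α)
    (conj : E →ₐ[ℚ_[p]] E) (hconj : conj α = -α)
    (k : ℕ) (hk : 1 ≤ k) (a b : E) (ν : ℚ_[p])
    (b₁ : Matrix (Fin 2) (Fin 2) E)
    (hb₁ : b₁ = (-(pE p E ^ 2 * ((pE p E)⁻¹) ^ k * (2 : E)⁻¹ * algebraMap ℚ_[p] E ν)) •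
      !![-(((pE p E)⁻¹) ^ (k + 1)) * (conj a * b + a * conj b),
           2 * ((pE p E)⁻¹) ^ (k + 1) * (a * conj a);
         -(2 * ((pE p E)⁻¹) ^ (k + 1) * (b * conj b)),
           ((pE p E)⁻¹) ^ (k + 1) * (a * conj b + conj a * b)])
    (b₂ : E)
    (hb₂ : b₂ = -(pE p E * ((pE p E)⁻¹) ^ (2 * k) * (2 : E)⁻¹)
      * (a * conj b - conj a * b) * algebraMap ℚ_[p] E ν) :
    Matrix.charpoly b₁ = Matrix.charpoly (qmat p E conj b₂ 0) ∧
    Matrix.charpoly b₁ = Polynomial.X ^ 2 + Polynomial.C (b₂ * conj b₂) ∧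
    Matrix.trace b₁ = 0 ∧
    b₂ + conj b₂ = 0 ∧
    b₁.det = b₂ * conj b₂ :=
  stmt19_general p E α hspan conj hconj k a b ν b₁ hb₁ b₂ hb₂
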